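/- arXiv:1204.4663 — 3 statements merged into one kernel-verified Lean document; each statement's English description precedes it below -/
import Mathlib

section
/- Let n ≥ 1 and let d ≥ 2 be an integer, and set d₀ = min(2n, d). For i = 1, …, ⌊d₀/2⌋ let f_{d−2i} ∈ ℤ[x_1, …, x_n] be homogeneous of degree d−2i, and set P = Σ_{i=1}^{⌊d₀/2⌋} f_{d−2i}·t_i (a homogeneous polynomial of degree d). If a positive integer M divides P (i.e. P ∈ M·ℤ[x_1,…,x_n]), then there exist polynomials f̂_{d−2i} ∈ ℤ[x_1, …, x_n], i = 1, …, ⌊d₀/2⌋, such that Σ_{i=1}^{⌊d₀/2⌋} f̂_{d−2i}·t_i = P and M divides every f̂_{d−2i}. -/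
open MvPolynomial Finset

/-- `t n i` is the `i`-th elementary symmetric polynomial evaluated at the squares
of the variables, `t_i = s_i(x_1^2, …, x_n^2)`. -/
noncomputable def t (n i : ℕ) : MvPolynomial (Fin n) ℤ :=
  ∑ S ∈ Finset.powersetCard i (Finset.univ : Finset (Fin n)),
    ∏ j ∈ S, (X j : MvPolynomial (Fin n) ℤ) ^ 2

/-!
Write `k = ⌊d₀/2⌋ ≤ n` and `I = (t_1, …, t_k)`; the claim is that `M` is a non-zero-divisor
modulo `I`. For the lexicographic order with `x_1 > ⋯ > x_n`, the ideal `I` is also generated by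
`g_i = h_i(x_i², …, x_n²)`, `1 ≤ i ≤ k` (`h_i` the complete homogeneous symmetric polynomial),
because `g_i ≡ ±t_i` modulo `(t_1, …, t_{i-1})`. The `g_i` are monic with pairwise coprime leading
monomials `x_i^{2i}`, so every nonzero element of `I` has a leading monomial divisible by one of
them. Dividing `Q = P / M` by the `g_i` leaves a remainder `r` with `M r ∈ I` and no monomial
divisible by any `x_i^{2i}`, hence `r = 0` and `Q ∈ I`.
-/

theorem Finsupp.le_of_le_add_of_disjoint {σ : Type*} {a c d : σ →₀ ℕ} (h : a ≤ c + d)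
    (had : Disjoint a.support d.support) : a ≤ c := by
  intro x
  by_cases hx : x ∈ d.support
  · rw [Finsupp.notMem_support_iff.mp (disjoint_right.mp had hx)]
    exact Nat.zero_le _
  · simpa [Finsupp.notMem_support_iff.mp hx] using h x

theorem Finsupp.toLex_single_lt_toLex_single {σ : Type*} [LinearOrder σ] {i j : σ} (hij : i < j)
    (a : ℕ) {b : ℕ} (hb : 0 < b) : toLex (single j a) < toLex (single i b) :=
  Finsupp.Lex.lt_iff.mpr
    ⟨i, fun k hk => by simp [hk.ne', (hk.trans hij).ne'], by simp [hij.ne', hb]⟩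

namespace MonomialOrder

variable {σ R ι : Type*} [CommRing R] (m : MonomialOrder σ) {b : ι → MvPolynomial σ R}
  {s : Finset ι}

theorem exists_sub_mem_span_of_isUnit_leadingCoeff
    (hb : ∀ i ∈ s, IsUnit (m.leadingCoeff (b i))) (f : MvPolynomial σ R) :
    ∃ r, f - r ∈ Ideal.span (b '' s) ∧ ∀ u ∈ r.support, ∀ i ∈ s, ¬ m.degree (b i) ≤ u := by
  obtain ⟨g, r, hf, -, hr⟩ := m.div_set (B := b '' s) (by rintro _ ⟨i, hi, rfl⟩; exact hb i hi) f
  refine ⟨r, ?_, fun u hu i hi => hr u hu _ ⟨i, hi, rfl⟩⟩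
  have hg := LinearMap.mem_range_self
    (Finsupp.linearCombination (MvPolynomial σ R) fun p : b '' s => (p : MvPolynomial σ R)) g
  rw [Finsupp.range_linearCombination, Subtype.range_coe] at hg
  rwa [hf, add_sub_cancel_right]

theorem exists_sum_eq_of_mem_span [LinearOrder ι]
    (hb : ∀ i ∈ s, IsUnit (m.leadingCoeff (b i))) {f : MvPolynomial σ R}
    (hf : f ∈ Ideal.span (b '' s)) :
    ∃ c : ι → MvPolynomial σ R, f = ∑ i ∈ s, c i * b i ∧
      ∀ i ∈ s, ∀ j ∈ s, j < i → ∀ u ∈ (c i).support, ¬ m.degree (b j) ≤ u := by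
  classical
  -- The quotient of the top coefficient by the lower generators is absorbed into their
  -- coefficients.
  induction s using Finset.induction_on_max generalizing f with
  | empty => exact ⟨0, by simpa using hf, by simp⟩
  | insert a s hlt ih =>
    have has : a ∉ s := fun h => lt_irrefl a (hlt a h)
    rw [coe_insert, Set.image_insert_eq, Ideal.mem_span_insert] at hf
    obtain ⟨p, f', hf', rfl⟩ := hf
    have hbs : ∀ i ∈ s, IsUnit (m.leadingCoeff (b i)) := fun i hi => hb i (mem_insert_of_mem hi)
    obtain ⟨r, hpr, hr⟩ := m.exists_sub_mem_span_of_isUnit_leadingCoeff hbs p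
    obtain ⟨c, hc, hcred⟩ := ih hbs (Ideal.add_mem _ (Ideal.mul_mem_right (b a) _ hpr) hf')
    refine ⟨Function.update c a r, ?_, ?_⟩
    · rw [sum_insert has, Function.update_self,
        sum_congr rfl fun i hi => by rw [Function.update_of_ne (ne_of_mem_of_not_mem hi has)],
        ← hc]
      ring
    · intro i hi j hj hji u hu
      rcases mem_insert.mp hi with rfl | hi
      · rw [Function.update_self] at hu
        exact hr u hu j ((mem_insert.mp hj).resolve_left hji.ne)
      · rw [Function.update_of_ne (ne_of_mem_of_not_mem hi has)] at hu
        exact hcred i hi j ((mem_insert.mp hj).resolve_left (hji.trans (hlt i hi)).ne) hji u hu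

theorem exists_degree_sum_eq {f : ι → MvPolynomial σ R}
    (hf : ∀ i ∈ s, ∀ j ∈ s, f i ≠ 0 → f j ≠ 0 → m.degree (f i) = m.degree (f j) → i = j)
    (hs : ∑ i ∈ s, f i ≠ 0) :
    ∃ i ∈ s, f i ≠ 0 ∧ m.degree (∑ i ∈ s, f i) = m.degree (f i) := by
  classical
  induction s using Finset.induction_on with
  | empty => simp at hs
  | insert a s has ih =>
    have hfs : ∀ i ∈ s, ∀ j ∈ s, f i ≠ 0 → f j ≠ 0 → m.degree (f i) = m.degree (f j) → i = j :=
      fun i hi j hj => hf i (mem_insert_of_mem hi) j (mem_insert_of_mem hj)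
    rw [sum_insert has] at hs ⊢
    by_cases hfa : f a = 0
    · rw [hfa, zero_add] at hs ⊢
      obtain ⟨i, hi, h⟩ := ih hfs hs
      exact ⟨i, mem_insert_of_mem hi, h⟩
    by_cases hs0 : ∑ i ∈ s, f i = 0
    · exact ⟨a, mem_insert_self a s, hfa, by rw [hs0, add_zero]⟩
    obtain ⟨i, hi, hfi, hdeg⟩ := ih hfs hs0
    have hne : m.degree (f a) ≠ m.degree (∑ i ∈ s, f i) := fun h =>
      ne_of_mem_of_not_mem hi has
        (hf i (mem_insert_of_mem hi) a (mem_insert_self a s) hfi hfa (hdeg ▸ h.symm))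
    have hsup := m.degree_add_of_ne hne
    rcases max_choice (m.toSyn (m.degree (f a))) (m.toSyn (m.degree (∑ i ∈ s, f i))) with h | h
    · exact ⟨a, mem_insert_self a s, hfa, m.toSyn.injective (hsup.trans h)⟩
    · exact ⟨i, mem_insert_of_mem hi, hfi, m.toSyn.injective (hsup.trans h) |>.trans hdeg⟩

/-- In a representation as in `exists_sum_eq_of_mem_span`, coprimality of the leading monomials
makes the leading monomials of the nonzero terms distinct, so one of them is that of `f`. -/
theorem exists_degree_le_of_mem_span [LinearOrder ι]
    (hb : ∀ i ∈ s, IsUnit (m.leadingCoeff (b i)))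
    (hdisj : (s : Set ι).Pairwise fun i j =>
      Disjoint (m.degree (b i)).support (m.degree (b j)).support)
    {f : MvPolynomial σ R} (hf : f ∈ Ideal.span (b '' s)) (hf0 : f ≠ 0) :
    ∃ i ∈ s, m.degree (b i) ≤ m.degree f := by
  obtain ⟨c, rfl, hc⟩ := m.exists_sum_eq_of_mem_span hb hf
  have hdeg : ∀ i ∈ s, c i * b i ≠ 0 → m.degree (c i * b i) = m.degree (c i) + m.degree (b i) :=
    fun i hi h => m.degree_mul_of_isRegular_right (left_ne_zero_of_mul h) (hb i hi).isRegular
  have hinj : ∀ i ∈ s, ∀ j ∈ s, c i * b i ≠ 0 → c j * b j ≠ 0 →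
      m.degree (c i * b i) = m.degree (c j * b j) → i = j := by
    intro i hi j hj h0i h0j h
    by_contra hij
    wlog hji : j < i generalizing i j
    · exact this j hj i hi h0j h0i h.symm (Ne.symm hij) (lt_of_le_of_ne (not_lt.mp hji) hij)
    rw [hdeg i hi h0i, hdeg j hj h0j] at h
    have hle : m.degree (b j) ≤ m.degree (c i) :=
      Finsupp.le_of_le_add_of_disjoint (h ▸ le_add_self) (hdisj hj hi hji.ne)
    exact hc i hi j hj hji _ ((m.degree_mem_support_iff _).mpr (left_ne_zero_of_mul h0i)) hle
  obtain ⟨i, hi, h0i, hsum⟩ := m.exists_degree_sum_eq hinj hf0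
  exact ⟨i, hi, by rw [hsum, hdeg i hi h0i]; exact le_add_self⟩

theorem mem_span_of_C_mul_mem_span [LinearOrder ι]
    (hb : ∀ i ∈ s, IsUnit (m.leadingCoeff (b i)))
    (hdisj : (s : Set ι).Pairwise fun i j =>
      Disjoint (m.degree (b i)).support (m.degree (b j)).support)
    {a : R} (ha : IsRegular a) {f : MvPolynomial σ R} (hf : C a * f ∈ Ideal.span (b '' s)) :
    f ∈ Ideal.span (b '' s) := by
  obtain ⟨r, hfr, hr⟩ := m.exists_sub_mem_span_of_isUnit_leadingCoeff hb f
  suffices r = 0 by rwa [this, sub_zero] at hfr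
  by_contra hr0
  have har : C a * r ∈ Ideal.span (b '' s) := by
    have := Ideal.sub_mem _ hf (Ideal.mul_mem_left _ (C a) hfr)
    rwa [← mul_sub, sub_sub_cancel] at this
  have hlc : IsRegular (m.leadingCoeff (C a)) := by rwa [m.leadingCoeff_C]
  have hdeg : m.degree (C a * r) = m.degree r := by
    rw [m.degree_mul_of_isRegular_left hlc hr0, m.degree_C, zero_add]
  have har0 : C a * r ≠ 0 := by
    rw [← m.leadingCoeff_ne_zero_iff, m.leadingCoeff_mul_of_isRegular_left hlc, m.leadingCoeff_C]
    exact fun h => (m.leadingCoeff_ne_zero_iff.mpr hr0) (ha.left.mul_left_eq_zero_iff.mp h)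
  obtain ⟨i, hi, hle⟩ := m.exists_degree_le_of_mem_span hb hdisj har har0
  exact hr _ ((m.degree_mem_support_iff r).mpr hr0) i hi (hdeg ▸ hle)

end MonomialOrder

theorem Multiset.esymm_cons_succ {R : Type*} [CommSemiring R] (a : R) (s : Multiset R) (j : ℕ) :
    (a ::ₘ s).esymm (j + 1) = s.esymm (j + 1) + a * s.esymm j := by
  simp [Multiset.esymm, Multiset.powersetCard_cons, Multiset.sum_map_mul_left]

section SymmetricFunctions

variable {A : Type*} [CommRing A] (y : ℕ → A) (n : ℕ)

noncomputable def esymmPrefix (r j : ℕ) : A := ((Multiset.range r).map y).esymm j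

/-- `hsymmSuffix y n r d = h_d(y r, …, y (n - 1))`, the complete homogeneous symmetric
polynomial of degree `d` evaluated at the terms of index `r ≤ l < n`. -/
noncomputable def hsymmSuffix : ℕ → ℕ → A
  | _, 0 => 1
  | r, d + 1 => if r < n then hsymmSuffix (r + 1) (d + 1) + y r * hsymmSuffix r d else 0
termination_by r d => (d, n - r)

variable {y n}

@[simp] theorem esymmPrefix_zero_right (r : ℕ) : esymmPrefix y r 0 = 1 := by
  simp [esymmPrefix, Multiset.esymm]

theorem esymmPrefix_succ_succ (r j : ℕ) :
    esymmPrefix y (r + 1) (j + 1) = esymmPrefix y r (j + 1) + y r * esymmPrefix y r j := by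
  rw [esymmPrefix, Multiset.range_succ, Multiset.map_cons, Multiset.esymm_cons_succ]; rfl

theorem esymmPrefix_of_lt {r j : ℕ} (h : r < j) : esymmPrefix y r j = 0 := by
  rw [esymmPrefix, Multiset.esymm, Multiset.powersetCard_eq_empty _ (by simpa using h)]
  simp

@[simp] theorem hsymmSuffix_zero_right (r : ℕ) : hsymmSuffix y n r 0 = 1 := by
  rw [hsymmSuffix]

theorem hsymmSuffix_succ_of_lt {r : ℕ} (h : r < n) (d : ℕ) :
    hsymmSuffix y n r (d + 1) = hsymmSuffix y n (r + 1) (d + 1) + y r * hsymmSuffix y n r d := by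
  rw [hsymmSuffix, if_pos h]

theorem hsymmSuffix_succ_of_le {r : ℕ} (h : n ≤ r) (d : ℕ) : hsymmSuffix y n r (d + 1) = 0 := by
  rw [hsymmSuffix, if_neg (not_lt.mpr h)]

/-- Coefficientwise form of
`∏_{r ≤ l < n} (1 - y_l z)⁻¹ = ∏_{l < r} (1 - y_l z) · ∏_{l < n} (1 - y_l z)⁻¹`. -/
theorem hsymmSuffix_eq_sum {r : ℕ} (hr : r ≤ n) (d : ℕ) :
    hsymmSuffix y n r d =
      ∑ j ∈ range (d + 1), (-1) ^ j * esymmPrefix y r j * hsymmSuffix y n 0 (d - j) := by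
  induction r generalizing d with
  | zero =>
    rw [sum_range_succ', sum_eq_zero fun j _ => by simp [esymmPrefix_of_lt (Nat.succ_pos j)]]
    simp
  | succ r ih =>
    cases d with
    | zero => simp
    | succ d =>
      have hsucc : hsymmSuffix y n (r + 1) (d + 1) =
          hsymmSuffix y n r (d + 1) - y r * hsymmSuffix y n r d := by
        rw [hsymmSuffix_succ_of_lt (r := r) (by omega)]; ring
      rw [hsucc, ih (by omega), ih (by omega), sum_range_succ' _ (d + 1),
        sum_range_succ' (fun j => _ * esymmPrefix y (r + 1) j * _) (d + 1), mul_sum]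
      simp only [esymmPrefix_succ_succ, esymmPrefix_zero_right, Nat.add_sub_add_right]
      rw [sub_eq_add_neg, ← sum_neg_distrib, add_right_comm, ← sum_add_distrib]
      exact congrArg (· + _) (sum_congr rfl fun j _ => by ring)

theorem hsymmSuffix_zero_sub_mem (m : ℕ) :
    hsymmSuffix y n 0 (m + 1) - (-1) ^ m * esymmPrefix y n (m + 1) ∈
      Ideal.span (esymmPrefix y n '' ↑(Icc 1 m)) := by
  have h0 := hsymmSuffix_eq_sum (y := y) (le_refl n) (m + 1)
  rw [hsymmSuffix_succ_of_le le_rfl, sum_range_succ, sum_range_succ'] at h0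
  have hmid : ∑ j ∈ range m, (-1) ^ (j + 1) * esymmPrefix y n (j + 1) *
      hsymmSuffix y n 0 (m + 1 - (j + 1)) ∈ Ideal.span (esymmPrefix y n '' ↑(Icc 1 m)) :=
    Ideal.sum_mem _ fun j hj => Ideal.mul_mem_right _ _ (Ideal.mul_mem_left _ _
      (Ideal.subset_span ⟨j + 1, by simp at hj ⊢; omega, rfl⟩))
  convert neg_mem hmid using 1
  simp only [Nat.sub_self, Nat.sub_zero, hsymmSuffix_zero_right, esymmPrefix_zero_right] at h0
  linear_combination -h0

theorem hsymmSuffix_zero_mem {k m : ℕ} (hk : k ∈ Icc 1 m) :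
    hsymmSuffix y n 0 k ∈ Ideal.span (esymmPrefix y n '' ↑(Icc 1 m)) := by
  obtain ⟨k, rfl⟩ : ∃ k', k = k' + 1 := ⟨k - 1, by simp at hk; omega⟩
  have hle : Ideal.span (esymmPrefix y n '' ↑(Icc 1 k)) ≤
      Ideal.span (esymmPrefix y n '' ↑(Icc 1 m)) :=
    Ideal.span_mono (Set.image_mono (coe_subset.mpr (Icc_subset_Icc_right (by simp at hk; omega))))
  have := add_mem (hle (hsymmSuffix_zero_sub_mem k))
    (Ideal.mul_mem_left _ ((-1) ^ k) (Ideal.subset_span ⟨k + 1, hk, rfl⟩))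
  rwa [sub_add_cancel] at this

theorem hsymmSuffix_sub_mem {m : ℕ} (hm : m ≤ n) :
    hsymmSuffix y n m (m + 1) - (-1) ^ m * esymmPrefix y n (m + 1) ∈
      Ideal.span (esymmPrefix y n '' ↑(Icc 1 m)) := by
  rw [hsymmSuffix_eq_sum hm, sum_range_succ, sum_range_succ', esymmPrefix_of_lt (lt_add_one m)]
  have hmid : ∑ j ∈ range m, (-1) ^ (j + 1) * esymmPrefix y m (j + 1) *
      hsymmSuffix y n 0 (m + 1 - (j + 1)) ∈ Ideal.span (esymmPrefix y n '' ↑(Icc 1 m)) :=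
    Ideal.sum_mem _ fun j hj => Ideal.mul_mem_left _ _
      (hsymmSuffix_zero_mem (by simp at hj ⊢; omega))
  convert add_mem hmid (hsymmSuffix_zero_sub_mem m) using 1
  simp [add_sub_assoc]

end SymmetricFunctions

theorem Ideal.span_image_Icc_eq_of_sub_mem {A : Type*} [CommRing A] {p q : ℕ → A} (u : ℕ → Aˣ)
    (k : ℕ) (h : ∀ i < k, p (i + 1) - u i * q (i + 1) ∈ Ideal.span (q '' ↑(Icc 1 i))) :
    Ideal.span (p '' ↑(Icc 1 k)) = Ideal.span (q '' ↑(Icc 1 k)) := by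
  induction k with
  | zero => simp
  | succ k ih =>
    rw [← insert_Icc_right_eq_Icc_add_one (by omega : 1 ≤ k + 1), coe_insert,
      Set.image_insert_eq, Set.image_insert_eq, Ideal.span_insert, Ideal.span_insert,
      ih fun i hi => h i (by omega)]
    set J := Ideal.span (q '' ↑(Icc 1 k))
    have key : ∀ {a b : A} (v : A), a - v * b ∈ J → Ideal.span {a} ⊔ J ≤ Ideal.span {b} ⊔ J :=
      fun {a b} v hab => sup_le ((Ideal.span_singleton_le_iff_mem _).mpr (by
        simpa using add_mem (Ideal.mem_sup_right hab)
          (Ideal.mem_sup_left (Ideal.mul_mem_left _ v (Ideal.mem_span_singleton_self b)))))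
        le_sup_right
    have hk := h k (lt_add_one k)
    refine le_antisymm (key _ hk) (key ↑(u k)⁻¹ ?_)
    convert J.mul_mem_left (-↑(u k)⁻¹) hk using 1
    linear_combination (-q (k + 1)) * (u k).inv_mul

noncomputable def squaredVar (R : Type*) [CommRing R] (n l : ℕ) : MvPolynomial (Fin n) R :=
  if h : l < n then X ⟨l, h⟩ ^ 2 else 0

section LexDegree

open MonomialOrder

variable {R : Type*} [CommRing R] [Nontrivial R] {n : ℕ}

theorem monic_hsymmSuffix_squaredVar_succ {r d : ℕ} (hr : r < n)
    (hmon : lex.Monic (hsymmSuffix (squaredVar R n) n r d))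
    (hdeg : lex.degree (hsymmSuffix (squaredVar R n) n r d) = Finsupp.single ⟨r, hr⟩ (2 * d))
    (hlt : lex.degree (hsymmSuffix (squaredVar R n) n (r + 1) (d + 1)) ≺[lex]
      Finsupp.single ⟨r, hr⟩ (2 * (d + 1))) :
    lex.Monic (hsymmSuffix (squaredVar R n) n r (d + 1)) ∧
      lex.degree (hsymmSuffix (squaredVar R n) n r (d + 1)) =
        Finsupp.single ⟨r, hr⟩ (2 * (d + 1)) := by
  classical
  have hX : lex.Monic (X ⟨r, hr⟩ ^ 2 : MvPolynomial (Fin n) R) := monic_X.pow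
  have hXdeg : lex.degree (X ⟨r, hr⟩ ^ 2 * hsymmSuffix (squaredVar R n) n r d) =
      Finsupp.single ⟨r, hr⟩ (2 * (d + 1)) := by
    rw [lex.degree_mul_of_isRegular_left (hX.leadingCoeff_eq_one ▸ isRegular_one) hmon.ne_zero,
      hdeg, X_pow_eq_monomial, degree_monomial, if_neg one_ne_zero, ← Finsupp.single_add]
    ring_nf
  rw [hsymmSuffix_succ_of_lt hr, add_comm, squaredVar, dif_pos hr]
  exact ⟨(hX.mul hmon).add_of_lt (hXdeg ▸ hlt), (degree_add_of_lt (hXdeg ▸ hlt)).trans hXdeg⟩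

theorem monic_hsymmSuffix_squaredVar (d : ℕ) {r : ℕ} (hr : r < n) :
    lex.Monic (hsymmSuffix (squaredVar R n) n r d) ∧
      lex.degree (hsymmSuffix (squaredVar R n) n r d) = Finsupp.single ⟨r, hr⟩ (2 * d) := by
  induction d generalizing r with
  | zero => simp [monic_one]
  | succ d ih =>
    obtain ⟨k, hk⟩ := Nat.exists_eq_add_of_lt hr
    induction k generalizing r with
    | zero =>
      refine monic_hsymmSuffix_squaredVar_succ hr (ih hr).1 (ih hr).2 ?_
      rw [hsymmSuffix_succ_of_le (by omega), degree_zero, map_zero]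
      exact lex.toSyn_lt_iff_ne_zero.mpr
        ((lex.toSyn_eq_zero_iff _).not.mpr (Finsupp.single_ne_zero.mpr (by omega)))
    | succ k ihk =>
      refine monic_hsymmSuffix_squaredVar_succ hr (ih hr).1 (ih hr).2 (lex_lt_iff.mpr ?_)
      rw [(ihk (by omega) (by omega)).2]
      exact Finsupp.toLex_single_lt_toLex_single (Fin.mk_lt_mk.mpr (lt_add_one r)) _ (by omega)

end LexDegree

theorem t_eq_esymmPrefix (n j : ℕ) : t n j = esymmPrefix (squaredVar ℤ n) n j := by
  rw [t, ← Finset.esymm_map_val, esymmPrefix, ← range_val, ← Nat.Iio_eq_range,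
    ← Fin.map_valEmbedding_univ, map_val, Multiset.map_map]
  congr 2
  funext i
  simp [squaredVar]

theorem mem_span_t_of_C_mul_mem {n k : ℕ} (hk : k ≤ n) {a : ℤ} (ha : a ≠ 0)
    {f : MvPolynomial (Fin n) ℤ} (hf : C a * f ∈ Ideal.span (t n '' ↑(Icc 1 k))) :
    f ∈ Ideal.span (t n '' ↑(Icc 1 k)) := by
  -- `g i = h_i(x_i², …, x_n²)` in the paper's 1-based names of the variables.
  set g : ℕ → MvPolynomial (Fin n) ℤ := fun i => hsymmSuffix (squaredVar ℤ n) n (i - 1) i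
  have hspan : Ideal.span (g '' ↑(Icc 1 k)) = Ideal.span (t n '' ↑(Icc 1 k)) := by
    rw [show t n = esymmPrefix (squaredVar ℤ n) n from funext (t_eq_esymmPrefix n)]
    exact Ideal.span_image_Icc_eq_of_sub_mem (fun i => (-1) ^ i) k fun i hi => by
      simpa [g] using hsymmSuffix_sub_mem (y := squaredVar ℤ n) (by omega : i ≤ n)
  have hg : ∀ i (_ : 1 ≤ i) (_ : i ≤ k), MonomialOrder.lex.Monic (g i) ∧
      MonomialOrder.lex.degree (g i) = Finsupp.single ⟨i - 1, by omega⟩ (2 * i) :=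
    fun i _ hik => monic_hsymmSuffix_squaredVar i (by omega)
  rw [← hspan] at hf ⊢
  refine MonomialOrder.lex.mem_span_of_C_mul_mem_span (fun i hi => ?_) (fun i hi j hj hij => ?_)
    (IsRegular.of_ne_zero ha) hf
  · rw [mem_Icc] at hi
    rw [(hg i hi.1 hi.2).1.leadingCoeff_eq_one]
    exact isUnit_one
  · rw [mem_coe, mem_Icc] at hi hj
    rw [(hg i hi.1 hi.2).2, (hg j hj.1 hj.2).2, Finsupp.support_single _ (by omega),
      Finsupp.support_single _ (by omega), disjoint_singleton, Ne, Fin.mk.injEq]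
    omega

theorem stmt0_general (n : ℕ) (d : ℕ)
    (d₀ : ℕ) (hd₀ : d₀ = min (2 * n) d)
    (M : ℕ) (hM : 0 < M)
    (f : ℕ → MvPolynomial (Fin n) ℤ)
    (P : MvPolynomial (Fin n) ℤ)
    (hP : P = ∑ i ∈ Finset.Icc 1 (d₀ / 2), f i * t n i)
    (hdvd : (C (M : ℤ) : MvPolynomial (Fin n) ℤ) ∣ P) :
    ∃ fhat : ℕ → MvPolynomial (Fin n) ℤ,
      (∑ i ∈ Finset.Icc 1 (d₀ / 2), fhat i * t n i = P) ∧
      ∀ i ∈ Finset.Icc 1 (d₀ / 2), (C (M : ℤ) : MvPolynomial (Fin n) ℤ) ∣ fhat i := by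
  obtain ⟨Q, rfl⟩ := hdvd
  have hQ : Q ∈ Ideal.span (t n '' ↑(Icc 1 (d₀ / 2))) := by
    refine mem_span_t_of_C_mul_mem (a := M) (by omega) (by exact_mod_cast hM.ne') ?_
    rw [hP]
    exact (Submodule.mem_span_image_finset_iff_exists_fun' _).mpr ⟨f, rfl⟩
  obtain ⟨c, hc⟩ := (Submodule.mem_span_image_finset_iff_exists_fun' _).mp hQ
  refine ⟨fun i => C (M : ℤ) * c i, ?_, fun i _ => dvd_mul_right _ _⟩
  simp [← hc, mul_sum, mul_assoc]

theorem stmt0 (n : ℕ) (hn : 1 ≤ n) (d : ℕ) (hd : 2 ≤ d)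
    (d₀ : ℕ) (hd₀ : d₀ = min (2 * n) d)
    (M : ℕ) (hM : 0 < M)
    (f : ℕ → MvPolynomial (Fin n) ℤ)
    (hf : ∀ i ∈ Finset.Icc 1 (d₀ / 2), (f i).IsHomogeneous (d - 2 * i))
    (P : MvPolynomial (Fin n) ℤ)
    (hP : P = ∑ i ∈ Finset.Icc 1 (d₀ / 2), f i * t n i)
    (hdvd : (C (M : ℤ) : MvPolynomial (Fin n) ℤ) ∣ P) :
    ∃ fhat : ℕ → MvPolynomial (Fin n) ℤ,
      (∑ i ∈ Finset.Icc 1 (d₀ / 2), fhat i * t n i = P) ∧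
      ∀ i ∈ Finset.Icc 1 (d₀ / 2), (C (M : ℤ) : MvPolynomial (Fin n) ℤ) ∣ fhat i :=
  stmt0_general n d d₀ hd₀ M hM f P hP hdvd
end

section
/- Every homogeneous element P of degree d ≥ 2 of the ideal K can be written as P = Σ_{i=1}^{m} f_i·t_i where m = min(n, ⌊d/2⌋) and each f_i ∈ ℤ[x_1, …, x_n] is homogeneous of degree d − 2i. -/
/-! Write `P = ∑ lᵢ tᵢ` with arbitrary coefficients and take the degree-`d` component of both
sides: since `tᵢ` is homogeneous of degree `2i`, that component of `lᵢ tᵢ` is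
`(component of lᵢ of degree d - 2i) · tᵢ`, and it vanishes when `2i > d`. -/

open MvPolynomial Finset

/-- `K n` is the ideal of `ℤ[x_1, …, x_n]` generated by `t_1, …, t_n`. -/
noncomputable def K (n : ℕ) : Ideal (MvPolynomial (Fin n) ℤ) :=
  Ideal.span ((fun i => t n i) '' (Set.Icc 1 n))

namespace MvPolynomial

variable {σ R : Type*} [CommSemiring R]

lemma homogeneousComponent_mul_of_isHomogeneous (p : MvPolynomial σ R) {q : MvPolynomial σ R}
    {e : ℕ} (hq : q.IsHomogeneous e) (m : ℕ) :
    homogeneousComponent m (p * q) =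
      if e ≤ m then homogeneousComponent (m - e) p * q else 0 := by
  induction p using MvPolynomial.induction_on' with
  | monomial a c =>
    have hmul := (isHomogeneous_monomial c (rfl : a.degree = a.degree)).mul hq
    rw [homogeneousComponent_of_mem hmul,
      homogeneousComponent_of_mem (isHomogeneous_monomial c rfl)]
    split_ifs <;> first | rfl | (exfalso; omega)
  | add p₁ p₂ h₁ h₂ =>
    rw [add_mul, map_add, h₁, h₂, map_add, add_mul]
    split_ifs <;> simp

lemma IsHomogeneous.eq_sum_homogeneousComponent_mul {ι : Type*} {P : MvPolynomial σ R} {d : ℕ}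
    (hP : P.IsHomogeneous d) (s : Finset ι) (l g : ι → MvPolynomial σ R) (e : ι → ℕ)
    (hg : ∀ i ∈ s, (g i).IsHomogeneous (e i)) (hPl : P = ∑ i ∈ s, l i * g i) :
    P = ∑ i ∈ s with e i ≤ d, homogeneousComponent (d - e i) (l i) * g i := by
  rw [← homogeneousComponent_eq_self hP, hPl, map_sum, sum_filter]
  exact sum_congr rfl fun i hi => homogeneousComponent_mul_of_isHomogeneous _ (hg i hi) d

end MvPolynomial

lemma t_isHomogeneous (n i : ℕ) : (t n i).IsHomogeneous (2 * i) := by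
  refine IsHomogeneous.sum _ _ _ fun S hS => ?_
  have hprod := IsHomogeneous.prod S (fun j => (X j : MvPolynomial (Fin n) ℤ) ^ 2) (fun _ => 2)
    fun j _ => (isHomogeneous_X ℤ j).pow 2
  simpa [(mem_powersetCard.mp hS).2, mul_comm] using hprod

lemma mem_K_iff_exists_sum (n : ℕ) (P : MvPolynomial (Fin n) ℤ) :
    P ∈ K n ↔ ∃ l : ℕ → MvPolynomial (Fin n) ℤ, ∑ i ∈ Icc 1 n, l i * t n i = P := by
  rw [K, ← coe_Icc]
  exact Submodule.mem_span_image_finset_iff_exists_fun' _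

theorem stmt2_general (n : ℕ) (d : ℕ)
    (P : MvPolynomial (Fin n) ℤ) (hPK : P ∈ K n) (hhom : P.IsHomogeneous d) :
    ∃ f : ℕ → MvPolynomial (Fin n) ℤ,
      (∀ i ∈ Finset.Icc 1 (min n (d / 2)), (f i).IsHomogeneous (d - 2 * i)) ∧
      P = ∑ i ∈ Finset.Icc 1 (min n (d / 2)), f i * t n i := by
  obtain ⟨l, hl⟩ := (mem_K_iff_exists_sum n P).mp hPK
  refine ⟨fun i => homogeneousComponent (d - 2 * i) (l i),
    fun i _ => homogeneousComponent_isHomogeneous _ _, ?_⟩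
  have hrange : {i ∈ Icc 1 n | 2 * i ≤ d} = Icc 1 (min n (d / 2)) := by
    ext i
    simp only [mem_filter, mem_Icc, le_min_iff]
    omega
  rw [hhom.eq_sum_homogeneousComponent_mul (Icc 1 n) l (t n) (2 * ·)
    (fun i _ => t_isHomogeneous n i) hl.symm, hrange]

theorem stmt2 (n : ℕ) (d : ℕ) (hd : 2 ≤ d)
    (P : MvPolynomial (Fin n) ℤ) (hPK : P ∈ K n) (hhom : P.IsHomogeneous d) :
    ∃ f : ℕ → MvPolynomial (Fin n) ℤ,
      (∀ i ∈ Finset.Icc 1 (min n (d / 2)), (f i).IsHomogeneous (d - 2 * i)) ∧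
      P = ∑ i ∈ Finset.Icc 1 (min n (d / 2)), f i * t n i :=
  stmt2_general n d P hPK hhom
end

section
/- Let n ≥ 4 and let A = ℤ[1/2]. A polynomial f ∈ A[x_1, …, x_n] is fixed by every even-signed permutation of the variables (x_j ↦ ε_j x_{σ(j)}, σ ∈ S_n, ε_j ∈ {±1} with an even number of ε_j equal to −1) if and only if f lies in the A-subalgebra generated by t_1, …, t_{n−1} and p_n = x_1⋯x_n. In other words, the invariant ring of the type-D_n Weyl group action on A[x_1, …, x_n] is ℤ[1/2][t_1, …, t_{n−1}, p_n], i.e. S^*(Λ)^W ⊗ ℤ[1/2] = ℤ[1/2][t_1, …, t_{n−1}, p_n] for type D_n. -/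
/-!
Let `τ` change the sign of one variable. If `f` is invariant under the even signed permutations,
then every signed permutation `(σ, ε)` acts on `f` as the identity or as `τ`, according to the sign
`∏ ε_j`. Hence `f + τ f` is invariant under all signed permutations and `f - τ f` is multiplied by
`∏ ε_j`. Since `2` is invertible, a polynomial invariant under all sign changes has only even
exponents, so it is `expand 2` of a polynomial which is symmetric, i.e. a polynomial in the
`t_i = expand 2 (esymm i)`; a polynomial multiplied by `∏ ε_j` has only odd exponents, so it is
`p_n` times an invariant one. As `2 f = (f + τ f) + (f - τ f)` and `t_n = p_n ^ 2`, this shows that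
`f ∈ A[t_1, …, t_{n-1}, p_n]`; the converse holds because the generators are invariant.
-/

open MvPolynomial Finset

/-- `A = ℤ[1/2]`, the localization of `ℤ` away from 2. -/
abbrev Ahalf : Type := Localization.Away (2 : ℤ)

/-- `tA n i = s_i(x_1^2, …, x_n^2)` over `ℤ[1/2]`. -/
noncomputable def tA (n i : ℕ) : MvPolynomial (Fin n) Ahalf :=
  ∑ S ∈ Finset.powersetCard i (Finset.univ : Finset (Fin n)),
    ∏ j ∈ S, (X j : MvPolynomial (Fin n) Ahalf) ^ 2

/-- `p_n = x_1 x_2 ⋯ x_n` over `ℤ[1/2]`. -/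
noncomputable def pnA (n : ℕ) : MvPolynomial (Fin n) Ahalf :=
  ∏ j : Fin n, X j

def IsSignVector {ι R : Type*} [Ring R] (ε : ι → R) : Prop := ∀ j, ε j = 1 ∨ ε j = -1

namespace IsSignVector

variable {ι R : Type*} [CommRing R] {ε ε' : ι → R}

lemma mul_self (h : IsSignVector ε) (j : ι) : ε j * ε j = 1 := by
  rcases h j with h | h <;> simp [h]

lemma mul (h : IsSignVector ε) (h' : IsSignVector ε') : IsSignVector (ε * ε') := fun j => by
  rcases h j with h | h <;> rcases h' j with h' | h' <;> simp [h, h']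

lemma comp (h : IsSignVector ε) (σ : ι → ι) : IsSignVector (ε ∘ σ) := fun j => h (σ j)

lemma mulSingle [DecidableEq ι] (k : ι) : IsSignVector (Pi.mulSingle k (-1) : ι → R) :=
  fun j => by by_cases hj : j = k <;> simp [hj]

variable [Fintype ι]

lemma prod_eq_one_or_eq_neg_one (h : IsSignVector ε) : ∏ j, ε j = 1 ∨ ∏ j, ε j = -1 := by
  refine prod_induction ε (fun x => x = 1 ∨ x = -1) ?_ (Or.inl rfl) fun j _ => h j
  rintro a b (rfl | rfl) (rfl | rfl) <;> simp

lemma prod_mul_self (h : IsSignVector ε) : (∏ j, ε j) * ∏ j, ε j = 1 := by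
  rw [← prod_mul_distrib, Fintype.prod_eq_one _ h.mul_self]

lemma isUnit_prod (h : IsSignVector ε) : IsUnit (∏ j, ε j) :=
  IsUnit.prod_univ_iff.mpr fun j => IsUnit.of_mul_eq_one _ (h.mul_self j)

end IsSignVector

section SignFlip

variable {ι R : Type*} [CommRing R] [Fintype ι] [DecidableEq ι]

lemma prod_mulSingle_neg_one_mul (k : ι) (ε : ι → R) :
    ∏ j, ((Pi.mulSingle k (-1) : ι → R) * ε) j = -∏ j, ε j := by
  simp [prod_mul_distrib, prod_pi_mulSingle']

lemma prod_mulSingle_neg_one_pow (k : ι) (m : ι → ℕ) :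
    ∏ j, (Pi.mulSingle k (-1) : ι → R) j ^ m j = (-1) ^ m k := by
  rw [Fintype.prod_eq_single k fun j hj => by simp [hj], Pi.mulSingle_eq_same]

end SignFlip

lemma mod_two_eq_of_neg_one_pow_mul_eq {R : Type*} [CommRing R] (h2 : IsUnit (2 : R)) {a : R}
    (ha : a ≠ 0) {d e : ℕ} (h : (-1) ^ d * a = (-1) ^ e * a) : d % 2 = e % 2 := by
  have hde : (-1) ^ (d + e) * a = a :=
    calc (-1) ^ (d + e) * a = (-1) ^ e * ((-1) ^ d * a) := by ring
      _ = ((-1) ^ 2) ^ e * a := by rw [h, ← mul_assoc, ← pow_add, ← two_mul, pow_mul]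
      _ = a := by simp
  rcases Nat.even_or_odd (d + e) with ⟨k, hk⟩ | hodd
  · omega
  · rw [hodd.neg_one_pow, neg_one_mul] at hde
    exact absurd (h2.mul_left_cancel (by linear_combination -hde : 2 * a = 2 * 0)) ha

namespace MvPolynomial

section CommSemiring

variable {ι S : Type*} [CommSemiring S]

lemma exists_expand_eq_of_forall_dvd {p : ℕ} {q : MvPolynomial ι S}
    (hq : ∀ m ∈ q.support, ∀ i, p ∣ m i) : ∃ G, expand p G = q := by
  refine ⟨∑ m ∈ q.support, monomial (m.mapRange (· / p) (Nat.zero_div p)) (coeff m q), ?_⟩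
  rw [map_sum]
  conv_rhs => rw [q.as_sum]
  refine sum_congr rfl fun m hm => ?_
  have hm' : p • m.mapRange (· / p) (Nat.zero_div p) = m :=
    Finsupp.ext fun i => by simp [Nat.mul_div_cancel' (hq m hm i)]
  rw [expand_monomial, hm']

lemma monomial_one_dvd_of_forall_le {s : ι →₀ ℕ} {q : MvPolynomial ι S}
    (hq : ∀ m ∈ q.support, s ≤ m) : monomial s 1 ∣ q := by
  rw [monomial_one_dvd_iff_modMonomial_eq_zero]
  ext m
  by_cases hsm : s ≤ m
  · rw [coeff_modMonomial_of_le _ hsm, coeff_zero]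
  · rw [coeff_modMonomial_of_not_le _ hsm, coeff_zero]
    exact notMem_support_iff.mp fun hm => hsm (hq m hm)

variable [Fintype ι]

lemma prod_X_dvd_of_forall_pos {q : MvPolynomial ι S} (hq : ∀ m ∈ q.support, ∀ i, 0 < m i) :
    ∏ i, X i ∣ q := by
  classical
  have hX : ∏ i, (X i : MvPolynomial ι S) = monomial (∑ i, Finsupp.single i 1) 1 := by
    rw [monomial_sum_one]
    rfl
  rw [hX]
  refine monomial_one_dvd_of_forall_le fun m hm i => ?_
  simpa [Finsupp.finsetSum_apply, Finsupp.single_apply, Nat.one_le_iff_ne_zero,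
    Nat.pos_iff_ne_zero] using hq m hm i

variable (ι S) in
lemma esymm_card : esymm ι S (Fintype.card ι) = ∏ j, X j := by
  rw [esymm, ← card_univ, powersetCard_self, sum_singleton]

end CommSemiring

variable {ι R : Type*} [CommRing R]

lemma IsSymmetric.mem_adjoin_esymm [Fintype ι] {G : MvPolynomial ι R} (hG : G.IsSymmetric) :
    G ∈ Algebra.adjoin R (Set.range fun i : Fin (Fintype.card ι) => esymm ι R (i + 1)) := by
  obtain ⟨Q, hQ⟩ := esymmAlgHom_surjective R le_rfl ⟨G, hG⟩
  rw [Algebra.adjoin_range_eq_range_aeval]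
  exact ⟨Q, (esymmAlgHom_apply Q).symm.trans (congrArg Subtype.val hQ)⟩

noncomputable def signedPerm (σ : Equiv.Perm ι) (ε : ι → R) :
    MvPolynomial ι R →ₐ[R] MvPolynomial ι R :=
  bind₁ fun j => C (ε j) * X (σ j)

lemma signedPerm_X (σ : Equiv.Perm ι) (ε : ι → R) (j : ι) :
    signedPerm σ ε (X j) = C (ε j) * X (σ j) :=
  bind₁_X_right _ _

lemma signedPerm_signedPerm (σ σ' : Equiv.Perm ι) (ε ε' : ι → R) (f : MvPolynomial ι R) :
    signedPerm σ ε (signedPerm σ' ε' f) = signedPerm (σ'.trans σ) (ε' * ε ∘ σ') f := by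
  rw [← AlgHom.comp_apply]
  congr 1
  refine algHom_ext fun j => ?_
  simp [signedPerm_X, mul_assoc]

lemma signedPerm_signedPerm_mulSingle [DecidableEq ι] (σ : Equiv.Perm ι) (ε : ι → R) (k : ι)
    (f : MvPolynomial ι R) :
    signedPerm σ ε (signedPerm 1 (Pi.mulSingle k (-1)) f) =
      signedPerm σ (Pi.mulSingle k (-1) * ε) f := by
  rw [signedPerm_signedPerm]
  rfl

lemma signedPerm_eq_rename (σ : Equiv.Perm ι) : signedPerm σ (1 : ι → R) = rename σ :=
  algHom_ext fun j => by simp [signedPerm_X]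

lemma signedPerm_expand_two {σ : Equiv.Perm ι} {ε : ι → R} (hε : IsSignVector ε)
    (F : MvPolynomial ι R) : signedPerm σ ε (expand 2 F) = expand 2 (rename σ F) := by
  have h : (signedPerm σ ε).comp (expand 2) = (expand 2).comp (rename σ) :=
    algHom_ext fun j => by
      simp only [AlgHom.comp_apply, expand_X, rename_X, map_pow, signedPerm_X]
      rw [mul_pow, ← map_pow, pow_two (ε j), hε.mul_self, C_1, one_mul]
  exact DFunLike.congr_fun h F

section Fintype

variable [Fintype ι]

lemma signedPerm_one_monomial (ε : ι → R) (d : ι →₀ ℕ) (r : R) :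
    signedPerm 1 ε (monomial d r) = monomial d ((∏ j, ε j ^ d j) * r) := by
  have hsupp : ∏ j, ε j ^ d j = ∏ j ∈ d.support, ε j ^ d j :=
    (prod_subset (subset_univ _) fun j _ hj => by simp [Finsupp.notMem_support_iff.mp hj]).symm
  rw [signedPerm, bind₁_monomial, monomial_eq, Finsupp.prod, hsupp]
  simp only [Equiv.Perm.one_apply, mul_pow, prod_mul_distrib, map_mul, map_prod, map_pow]
  ring

lemma coeff_signedPerm_one (ε : ι → R) (q : MvPolynomial ι R) (m : ι →₀ ℕ) :
    coeff m (signedPerm 1 ε q) = (∏ j, ε j ^ m j) * coeff m q := by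
  classical
  induction q using induction_on' with
  | monomial d r =>
    rw [signedPerm_one_monomial, coeff_monomial, coeff_monomial]
    split_ifs with h <;> simp [h]
  | add p q hp hq => simp only [map_add, coeff_add, hp, hq, mul_add]

lemma mod_two_eq_of_signedPerm_mulSingle [DecidableEq ι] (h2 : IsUnit (2 : R))
    {q : MvPolynomial ι R} {e : ℕ}
    (hq : ∀ k, signedPerm 1 (Pi.mulSingle k (-1)) q = C ((-1) ^ e) * q)
    {m : ι →₀ ℕ} (hm : m ∈ q.support) (k : ι) : m k % 2 = e % 2 := by
  have hcoeff := congrArg (coeff m) (hq k)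
  rw [coeff_signedPerm_one, prod_mulSingle_neg_one_pow, coeff_C_mul] at hcoeff
  exact mod_two_eq_of_neg_one_pow_mul_eq h2 (mem_support_iff.mp hm) hcoeff

end Fintype

/- Invariance under the Weyl group of type `B_n` (all signed permutations), the sign character
`(σ, ε) ↦ ∏ ε_j` of that group, and invariance under its kernel, the Weyl group of type `D_n`. -/

def IsSignedPermInvariant (f : MvPolynomial ι R) : Prop :=
  ∀ (σ : Equiv.Perm ι) (ε : ι → R), IsSignVector ε → signedPerm σ ε f = f

variable [Fintype ι]

def IsSignedPermAlternating (f : MvPolynomial ι R) : Prop :=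
  ∀ (σ : Equiv.Perm ι) (ε : ι → R), IsSignVector ε → signedPerm σ ε f = C (∏ j, ε j) * f

def IsEvenSignedPermInvariant (f : MvPolynomial ι R) : Prop :=
  ∀ (σ : Equiv.Perm ι) (ε : ι → R), IsSignVector ε → ∏ j, ε j = 1 → signedPerm σ ε f = f

variable (ι R) in
def evenSignedPermGenerators : Set (MvPolynomial ι R) :=
  Set.range (fun i : Fin (Fintype.card ι) => expand 2 (esymm ι R (i + 1))) ∪ {∏ j, X j}

lemma isSignedPermInvariant_expand_two_esymm (k : ℕ) :
    IsSignedPermInvariant (expand 2 (esymm ι R k)) := fun _ _ hε => by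
  rw [signedPerm_expand_two hε, rename_esymm]

lemma isSignedPermAlternating_prod_X : IsSignedPermAlternating (∏ j, X j : MvPolynomial ι R) :=
  fun σ ε _ => by
    simp only [map_prod, signedPerm_X, prod_mul_distrib, Equiv.prod_comp σ X]

lemma isEvenSignedPermInvariant_of_mem_adjoin {f : MvPolynomial ι R}
    (hf : f ∈ Algebra.adjoin R (evenSignedPermGenerators ι R)) : IsEvenSignedPermInvariant f := by
  intro σ ε hε hprod
  suffices Algebra.adjoin R (evenSignedPermGenerators ι R) ≤
      AlgHom.equalizer (signedPerm σ ε) (AlgHom.id R _) from this hf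
  refine Algebra.adjoin_le ?_
  rintro p (⟨i, rfl⟩ | rfl)
  · exact isSignedPermInvariant_expand_two_esymm _ σ ε hε
  · change signedPerm σ ε (∏ j, X j) = ∏ j, X j
    rw [isSignedPermAlternating_prod_X σ ε hε, hprod, C_1, one_mul]

variable [DecidableEq ι]

lemma IsSignedPermInvariant.exists_isSymmetric_expand_eq (h2 : IsUnit (2 : R))
    {q : MvPolynomial ι R} (hq : IsSignedPermInvariant q) :
    ∃ G : MvPolynomial ι R, G.IsSymmetric ∧ expand 2 G = q := by
  have heven : ∀ m ∈ q.support, ∀ k, 2 ∣ m k := fun m hm k =>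
    Nat.dvd_of_mod_eq_zero <| mod_two_eq_of_signedPerm_mulSingle h2 (e := 0)
      (fun k => by simpa using hq 1 _ (IsSignVector.mulSingle k)) hm k
  obtain ⟨G, rfl⟩ := exists_expand_eq_of_forall_dvd heven
  refine ⟨G, fun e => expand_injective two_pos ?_, rfl⟩
  rw [← rename_expand, ← signedPerm_eq_rename, hq e 1 fun _ => Or.inl rfl]

lemma IsSignedPermInvariant.mem_adjoin (h2 : IsUnit (2 : R)) {q : MvPolynomial ι R}
    (hq : IsSignedPermInvariant q) :
    q ∈ Algebra.adjoin R
      (Set.range fun i : Fin (Fintype.card ι) => expand 2 (esymm ι R (i + 1))) := by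
  obtain ⟨G, hG, rfl⟩ := hq.exists_isSymmetric_expand_eq h2
  have : expand 2 G ∈ (Algebra.adjoin R _).map (expand 2) := ⟨G, hG.mem_adjoin_esymm, rfl⟩
  rwa [AlgHom.map_adjoin, ← Set.range_comp] at this

lemma IsSignedPermAlternating.exists_eq_prod_X_mul (h2 : IsUnit (2 : R))
    {q : MvPolynomial ι R} (hq : IsSignedPermAlternating q) :
    ∃ h : MvPolynomial ι R, IsSignedPermInvariant h ∧ q = (∏ j, X j) * h := by
  have hodd : ∀ m ∈ q.support, ∀ k, 0 < m k := fun m hm k => by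
    have := mod_two_eq_of_signedPerm_mulSingle h2 (e := 1)
      (fun k => by simpa [prod_pi_mulSingle'] using hq 1 _ (IsSignVector.mulSingle k)) hm k
    omega
  obtain ⟨h, rfl⟩ := prod_X_dvd_of_forall_pos hodd
  refine ⟨h, fun σ ε hε => ?_, rfl⟩
  have hσε := hq σ ε hε
  rw [map_mul, isSignedPermAlternating_prod_X σ ε hε, mul_assoc] at hσε
  exact (isRegular_prod_X univ).left ((hε.isUnit_prod.map C).mul_left_cancel hσε)

namespace IsEvenSignedPermInvariant

variable {f : MvPolynomial ι R} (hf : IsEvenSignedPermInvariant f)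
include hf

omit [DecidableEq ι] in
lemma signedPerm_eq_of_prod_eq {σ σ' : Equiv.Perm ι} {ε ε' : ι → R} (hε : IsSignVector ε)
    (hε' : IsSignVector ε') (h : ∏ j, ε j = ∏ j, ε' j) :
    signedPerm σ ε f = signedPerm σ' ε' f := by
  set ρ := σ'.trans σ.symm
  have hρ : ∏ j, (ε' * ε ∘ ρ) j = 1 := by
    rw [Pi.mul_def, prod_mul_distrib, ← h, Function.comp_def, Equiv.prod_comp ρ ε,
      hε.prod_mul_self]
  have hcomp : signedPerm σ ε (signedPerm ρ (ε' * ε ∘ ρ) f) = signedPerm σ' ε' f := by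
    rw [signedPerm_signedPerm]
    congr 2
    · ext j; simp [ρ]
    · ext j; simp [mul_assoc, hε.mul_self]
  rw [← hcomp, hf ρ _ (hε'.mul (hε.comp ρ)) hρ]

lemma signedPerm_eq_signedPerm_mulSingle (k : ι) {σ : Equiv.Perm ι} {ε : ι → R}
    (hε : IsSignVector ε) (hs : ∏ j, ε j = -1) :
    signedPerm σ ε f = signedPerm 1 (Pi.mulSingle k (-1)) f :=
  hf.signedPerm_eq_of_prod_eq hε (IsSignVector.mulSingle k) (by simp [hs, prod_pi_mulSingle'])

lemma isSignedPermInvariant_add (k : ι) :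
    IsSignedPermInvariant (f + signedPerm 1 (Pi.mulSingle k (-1)) f) := by
  intro σ ε hε
  have hδε := (IsSignVector.mulSingle k).mul hε
  rw [map_add, signedPerm_signedPerm_mulSingle]
  rcases hε.prod_eq_one_or_eq_neg_one with hs | hs
  · rw [hf σ ε hε hs, hf.signedPerm_eq_signedPerm_mulSingle k hδε (by
      rw [prod_mulSingle_neg_one_mul, hs])]
  · rw [hf.signedPerm_eq_signedPerm_mulSingle k hε hs, hf σ _ hδε (by
      rw [prod_mulSingle_neg_one_mul, hs, neg_neg]), add_comm]

lemma isSignedPermAlternating_sub (k : ι) :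
    IsSignedPermAlternating (f - signedPerm 1 (Pi.mulSingle k (-1)) f) := by
  intro σ ε hε
  have hδε := (IsSignVector.mulSingle k).mul hε
  rw [map_sub, signedPerm_signedPerm_mulSingle]
  rcases hε.prod_eq_one_or_eq_neg_one with hs | hs
  · rw [hf σ ε hε hs, hf.signedPerm_eq_signedPerm_mulSingle k hδε (by
      rw [prod_mulSingle_neg_one_mul, hs]), hs, C_1, one_mul]
  · rw [hf.signedPerm_eq_signedPerm_mulSingle k hε hs, hf σ _ hδε (by
      rw [prod_mulSingle_neg_one_mul, hs, neg_neg]), hs, map_neg, C_1]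
    ring

lemma mem_adjoin (h2 : IsUnit (2 : R)) :
    f ∈ Algebra.adjoin R (evenSignedPermGenerators ι R) := by
  set A := Algebra.adjoin R (evenSignedPermGenerators ι R)
  rcases isEmpty_or_nonempty ι with hι | ⟨⟨k⟩⟩
  · rw [eq_C_of_isEmpty f]
    exact A.algebraMap_mem _
  have hB : ∀ q, IsSignedPermInvariant q → q ∈ A := fun q hq =>
    Algebra.adjoin_mono Set.subset_union_left (hq.mem_adjoin h2)
  obtain ⟨h, hh, hsub⟩ := (hf.isSignedPermAlternating_sub k).exists_eq_prod_X_mul h2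
  have h2f : (2 : R) • f = (f + signedPerm 1 (Pi.mulSingle k (-1)) f) + (∏ j, X j) * h := by
    rw [← hsub, two_smul]
    ring
  have hmem : (2 : R) • f ∈ A := h2f ▸ add_mem (hB _ (hf.isSignedPermInvariant_add k))
    (mul_mem (Algebra.subset_adjoin (Or.inr rfl)) (hB h hh))
  simpa [smul_smul] using A.smul_mem hmem (h2.unit⁻¹ : Rˣ)

end IsEvenSignedPermInvariant

theorem mem_adjoin_evenSignedPermGenerators_iff (h2 : IsUnit (2 : R)) {f : MvPolynomial ι R} :
    f ∈ Algebra.adjoin R (evenSignedPermGenerators ι R) ↔ IsEvenSignedPermInvariant f :=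
  ⟨isEvenSignedPermInvariant_of_mem_adjoin, fun hf => hf.mem_adjoin h2⟩

end MvPolynomial

lemma tA_eq_expand_esymm (n i : ℕ) : tA n i = expand 2 (esymm (Fin n) Ahalf i) := by
  simp only [tA, esymm, map_sum, map_prod, expand_X]

lemma adjoin_tA_pnA_eq (n : ℕ) :
    Algebra.adjoin Ahalf {p : MvPolynomial (Fin n) Ahalf |
      (∃ i ∈ Finset.Icc 1 (n - 1), p = tA n i) ∨ p = pnA n} =
      Algebra.adjoin Ahalf (evenSignedPermGenerators (Fin n) Ahalf) := by
  have hcard := Fintype.card_fin n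
  refine le_antisymm (Algebra.adjoin_le ?_) (Algebra.adjoin_le ?_)
  · rintro p (⟨i, hi, rfl⟩ | rfl)
    · rw [mem_Icc] at hi
      refine Algebra.subset_adjoin (Or.inl ⟨⟨i - 1, by omega⟩, ?_⟩)
      simp only [tA_eq_expand_esymm, Nat.sub_add_cancel hi.1]
    · exact Algebra.subset_adjoin (Or.inr rfl)
  · have hpn : pnA n ∈ Algebra.adjoin Ahalf {p : MvPolynomial (Fin n) Ahalf |
        (∃ i ∈ Finset.Icc 1 (n - 1), p = tA n i) ∨ p = pnA n} :=
      Algebra.subset_adjoin (Or.inr rfl)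
    rintro p (⟨i, rfl⟩ | rfl)
    · rcases Nat.lt_or_ge (i + 1) n with hi | hi
      · exact Algebra.subset_adjoin
          (Or.inl ⟨i + 1, mem_Icc.mpr ⟨by omega, by omega⟩, (tA_eq_expand_esymm n _).symm⟩)
      · have hin : (i : ℕ) + 1 = Fintype.card (Fin n) := by omega
        change expand 2 (esymm (Fin n) Ahalf (i + 1)) ∈ _
        rw [hin, esymm_card, map_prod]
        simpa [expand_X, prod_pow, pnA] using pow_mem hpn 2
    · exact hpn

lemma isUnit_two_ahalf : IsUnit (2 : Ahalf) := by
  simpa using IsLocalization.Away.algebraMap_isUnit (S := Ahalf) (2 : ℤ)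

theorem stmt9_general (n : ℕ) (f : MvPolynomial (Fin n) Ahalf) :
    (∀ (σ : Equiv.Perm (Fin n)) (ε : Fin n → Ahalf), (∀ j, ε j = 1 ∨ ε j = -1) →
      (∏ j : Fin n, ε j) = 1 →
      bind₁ (fun j : Fin n => C (ε j) * X (σ j)) f = f) ↔
    f ∈ Algebra.adjoin Ahalf {p : MvPolynomial (Fin n) Ahalf |
          (∃ i ∈ Finset.Icc 1 (n - 1), p = tA n i) ∨ p = pnA n} := by
  rw [adjoin_tA_pnA_eq]
  exact (mem_adjoin_evenSignedPermGenerators_iff isUnit_two_ahalf).symm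

theorem stmt9 (n : ℕ) (hn : 4 ≤ n) (f : MvPolynomial (Fin n) Ahalf) :
    (∀ (σ : Equiv.Perm (Fin n)) (ε : Fin n → Ahalf), (∀ j, ε j = 1 ∨ ε j = -1) →
      (∏ j : Fin n, ε j) = 1 →
      bind₁ (fun j : Fin n => C (ε j) * X (σ j)) f = f) ↔
    f ∈ Algebra.adjoin Ahalf {p : MvPolynomial (Fin n) Ahalf |
          (∃ i ∈ Finset.Icc 1 (n - 1), p = tA n i) ∨ p = pnA n} :=
  stmt9_general n f
end
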